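/- Let d ≥ 3, G = Isom(ℝ^d), and let μ be a Borel probability measure on G. Then for every x ∈ ℝ^d the operator norms satisfy ‖S_{|x|}‖ ≤ ‖T_x‖, where T_x = π_x(μ) acts on L²(SO(d)) and S_{|x|} = ρ_{|x|}(μ) acts on L²(𝕊^{d−1}). -/

import Mathlib

open MeasureTheory Matrix NNReal ENNReal Filter Topology

noncomputable section

/-- The special orthogonal group `SO(d)`, realized as the group of `d × d` real orthogonal
matrices of determinant one. -/
abbrev SOd (d : ℕ) : Type := ↥(Matrix.specialOrthogonalGroup (Fin d) ℝ)

/-- Euclidean space `ℝ^d`. -/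
abbrev Ed (d : ℕ) : Type := EuclideanSpace ℝ (Fin d)

instance (d : ℕ) : Group (SOd d) :=
  { (inferInstance : Monoid (SOd d)) with
    inv := fun A => ⟨star A.1, by
      obtain ⟨A, hA⟩ := A
      rw [Matrix.mem_specialOrthogonalGroup_iff] at hA ⊢
      refine ⟨Unitary.star_mem hA.1, ?_⟩
      rw [Matrix.star_eq_conjTranspose, Matrix.det_conjTranspose, hA.2]
      simp⟩
    inv_mul_cancel := fun A => Subtype.ext A.2.1.1 }

/-- The natural (linear, isometric) action of `SO(d)` on `ℝ^d` by matrix-vector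
multiplication. -/
def SOd.act {d : ℕ} (θ : SOd d) (x : Ed d) : Ed d := WithLp.toLp 2 (θ.1.mulVec x)

theorem SOd.act_add {d : ℕ} (θ : SOd d) (x y : Ed d) :
    θ.act (x + y) = θ.act x + θ.act y := congrArg (WithLp.toLp 2) (Matrix.mulVec_add _ _ _)

theorem SOd.act_mul {d : ℕ} (θ₁ θ₂ : SOd d) (x : Ed d) :
    (θ₁ * θ₂).act x = θ₁.act (θ₂.act x) := congrArg (WithLp.toLp 2) (Matrix.mulVec_mulVec _ _ _).symm

theorem SOd.one_act {d : ℕ} (x : Ed d) : (1 : SOd d).act x = x := congrArg (WithLp.toLp 2) (Matrix.one_mulVec _)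

theorem SOd.act_zero {d : ℕ} (θ : SOd d) : θ.act 0 = 0 := congrArg (WithLp.toLp 2) (Matrix.mulVec_zero _)

instance (d : ℕ) : MeasurableSpace (SOd d) := borel _
instance (d : ℕ) : BorelSpace (SOd d) := ⟨rfl⟩

/-- The group `Isom(ℝ^d) = ℝ^d ⋊ SO(d)` of orientation-preserving isometries of `ℝ^d`,
where `(v₁,θ₁)·(v₂,θ₂) = (v₁ + θ₁ v₂, θ₁ θ₂)`. -/
def IsomRd (d : ℕ) : Type := Ed d × SOd d

namespace IsomRd

variable {d : ℕ}

/-- The translation part `v(g)` of an isometry `g = (v(g), θ(g))`. -/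
def v (g : IsomRd d) : Ed d := g.1

/-- The rotation part `θ(g)` of an isometry `g = (v(g), θ(g))`; i.e. the quotient
homomorphism `θ : Isom(ℝ^d) → SO(d)`. -/
def rot (g : IsomRd d) : SOd d := g.2

instance : One (IsomRd d) := ⟨((0 : Ed d), (1 : SOd d))⟩
instance : Mul (IsomRd d) := ⟨fun g h => (g.1 + g.2.act h.1, g.2 * h.2)⟩
instance : Inv (IsomRd d) := ⟨fun g => (-(g.2⁻¹.act g.1), g.2⁻¹)⟩

instance : Group (IsomRd d) where
  mul_assoc g h k := by
    show (_, _) = (_, _)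
    rw [Prod.mk.injEq]
    constructor
    · show g.1 + g.2.act h.1 + (g.2 * h.2).act k.1 = g.1 + g.2.act (h.1 + h.2.act k.1)
      rw [SOd.act_add, SOd.act_mul, add_assoc]
    · exact mul_assoc _ _ _
  one_mul g := by
    show ((0 : Ed d) + (1 : SOd d).act g.1, 1 * g.2) = g
    rw [SOd.one_act, zero_add, one_mul]
    rfl
  mul_one g := by
    show (g.1 + g.2.act 0, g.2 * 1) = g
    rw [SOd.act_zero, add_zero, mul_one]
    rfl
  inv_mul_cancel g := by
    show (-(g.2⁻¹.act g.1) + g.2⁻¹.act g.1, g.2⁻¹ * g.2) = ((0 : Ed d), (1 : SOd d))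
    rw [neg_add_cancel, inv_mul_cancel]

instance : TopologicalSpace (IsomRd d) := inferInstanceAs (TopologicalSpace (Ed d × SOd d))
instance : MeasurableSpace (IsomRd d) := borel _
instance : BorelSpace (IsomRd d) := ⟨rfl⟩

/-- The natural isometric action of `Isom(ℝ^d)` on `ℝ^d`: `g(x) = v(g) + θ(g)x`. -/
def isomAct (g : IsomRd d) (x : Ed d) : Ed d := g.v + g.rot.act x

end IsomRd

/-- `e(y) = e^{-2πiy}`. -/
def eChar (y : ℝ) : ℂ := Complex.exp (-(2 * Real.pi * y) * Complex.I)

/-- The unitary representation `π_x : Isom(ℝ^d) → U(L²(SO(d)))` given by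
`(π_x(g)φ)(ω) = e(⟨ωx, v(g)⟩)·φ(θ(g)⁻¹ω)`, applied to a function `φ` on `SO(d)`. -/
def piRep {d : ℕ} (x : Ed d) (g : IsomRd d) (φ : SOd d → ℂ) : SOd d → ℂ :=
  fun ω => eChar (inner ℝ (SOd.act ω x) (IsomRd.v g) : ℝ) * φ ((IsomRd.rot g)⁻¹ * ω)

/-- The averaging operator `T_x = π_x(μ) = ∫_G π_x(g) dμ(g)` on `L²(SO(d))`, i.e.
`(T_x φ)(ω) = ∫_G e(⟨ωx, v(g)⟩)·φ(θ(g)⁻¹ω) dμ(g)`. -/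
def Tav {d : ℕ} (μ : Measure (IsomRd d)) (x : Ed d) (φ : SOd d → ℂ) : SOd d → ℂ :=
  fun ω => ∫ g, piRep x g φ ω ∂μ

/-- The operator norm `‖T_x‖` of `T_x = π_x(μ)` on `L²(SO(d), mSO)`, as the supremum of
`‖T_x φ‖₂` over unit vectors `φ ∈ L²(SO(d))`. -/
def TavNorm {d : ℕ} (μ : Measure (IsomRd d)) (mSO : Measure (SOd d)) (x : Ed d) : ℝ≥0∞ :=
  ⨆ (φ : SOd d → ℂ) (_ : MemLp φ 2 mSO ∧ eLpNorm φ 2 mSO = 1), eLpNorm (Tav μ x φ) 2 mSO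

/-- A measure `μ` on a group is symmetric if it is invariant under `g ↦ g⁻¹`. -/
def MeasureIsSymmetric {G : Type} [Group G] [MeasurableSpace G] (μ : Measure G) : Prop :=
  Measure.map (fun g => g⁻¹) μ = μ

/-- The unit sphere `𝕊^{d-1} ⊆ ℝ^d`. -/
abbrev Sph (d : ℕ) : Type := ↥(Metric.sphere (0 : Ed d) 1)

theorem SOd.norm_act {d : ℕ} (θ : SOd d) (x : Ed d) : ‖SOd.act θ x‖ = ‖x‖ := by
  have key : @inner ℝ _ _ (SOd.act θ x) (SOd.act θ x) = @inner ℝ _ _ x x := by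
    have h1 : ∀ a b : Ed d, @inner ℝ _ _ a b = dotProduct (WithLp.ofLp a) (WithLp.ofLp b) := by
      intro a b
      simp [PiLp.inner_apply, dotProduct, mul_comm]
    rw [h1, h1]
    simp only [SOd.act, WithLp.ofLp_toLp]
    rw [dotProduct_mulVec]
    have h2 : (Matrix.mulVec θ.1 (WithLp.ofLp x)) ᵥ* θ.1 = (θ.1ᵀ * θ.1) *ᵥ (WithLp.ofLp x) := by
      rw [← Matrix.mulVec_transpose, Matrix.mulVec_mulVec]
    have h3 : θ.1ᵀ * θ.1 = 1 := by
      have := θ.2.1.1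
      rwa [Matrix.star_eq_conjTranspose, Matrix.conjTranspose_eq_transpose_of_trivial] at this
    rw [h2, h3, Matrix.one_mulVec]
  have := congrArg Real.sqrt key
  rwa [real_inner_self_eq_norm_sq, real_inner_self_eq_norm_sq, Real.sqrt_sq (norm_nonneg _),
    Real.sqrt_sq (norm_nonneg _)] at this

/-- The action of `SO(d)` on the unit sphere `𝕊^{d-1}`. -/
def SOd.actS {d : ℕ} (θ : SOd d) (ξ : Sph d) : Sph d :=
  ⟨θ.act ξ.1, by
    rw [mem_sphere_zero_iff_norm, SOd.norm_act]
    exact mem_sphere_zero_iff_norm.mp ξ.2⟩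

/-- The unitary representation `ρ_r : Isom(ℝ^d) → U(L²(𝕊^{d-1}))` given by
`(ρ_r(g)φ)(ξ) = e(r⟨ξ, v(g)⟩)·φ(θ(g)⁻¹ξ)`, applied to a function `φ` on `𝕊^{d-1}`. -/
def rhoRep {d : ℕ} (r : ℝ) (g : IsomRd d) (φ : Sph d → ℂ) : Sph d → ℂ :=
  fun ξ => eChar (r * (inner ℝ (ξ : Ed d) (IsomRd.v g) : ℝ)) * φ (SOd.actS (IsomRd.rot g)⁻¹ ξ)

/-- The averaging operator `S_r = ρ_r(μ) = ∫_G ρ_r(g) dμ(g)` on `L²(𝕊^{d-1})`. -/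
def Sav {d : ℕ} (μ : Measure (IsomRd d)) (r : ℝ) (φ : Sph d → ℂ) : Sph d → ℂ :=
  fun ξ => ∫ g, rhoRep r g φ ξ ∂μ

/-- The operator norm `‖S_r‖` of `S_r = ρ_r(μ)` on `L²(𝕊^{d-1}, mS)`, as the supremum of
`‖S_r φ‖₂` over unit vectors `φ ∈ L²(𝕊^{d-1})`. -/
def SavNorm {d : ℕ} (μ : Measure (IsomRd d)) (mS : Measure (Sph d)) (r : ℝ) : ℝ≥0∞ :=
  ⨆ (φ : Sph d → ℂ) (_ : MemLp φ 2 mS ∧ eLpNorm φ 2 mS = 1), eLpNorm (Sav μ r φ) 2 mS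

/-! Write `x = ‖x‖ • u` with `u` a unit vector. Since `SO(d)` is compact and acts transitively on
the sphere, the orbit map `ω ↦ ω • u` pushes the Haar probability measure of `SO(d)` forward to the
rotation-invariant probability measure of `𝕊^{d-1}`, so `φ ↦ φ ∘ (· • u)` is an isometric embedding
`L²(𝕊^{d-1}) → L²(SO(d))`. As `⟨ωx, v⟩ = ‖x‖ ⟨ωu, v⟩`, this embedding intertwines `S_{‖x‖}` with
`T_x`, hence `‖S_{‖x‖} φ‖₂ = ‖T_x (φ ∘ (· • u))‖₂ ≤ ‖T_x‖` for every unit vector `φ`. -/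

namespace Matrix

variable {n : Type*} [Fintype n] [DecidableEq n]

theorem isCompact_unitaryGroup (𝕜 : Type*) [RCLike 𝕜] :
    IsCompact (unitaryGroup n 𝕜 : Set (Matrix n n 𝕜)) :=
  (isCompact_closedBall (0 : 𝕜) 1).matrix.of_isClosed_subset isClosed_unitary
    fun _ hU i j => mem_closedBall_zero_iff.2 (entry_norm_bound_of_unitary hU i j)

theorem isCompact_specialOrthogonalGroup :
    IsCompact (specialOrthogonalGroup n ℝ : Set (Matrix n n ℝ)) := by
  have hSO : (specialOrthogonalGroup n ℝ : Set (Matrix n n ℝ)) =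
      (unitaryGroup n ℝ : Set (Matrix n n ℝ)) ∩ det ⁻¹' {1} := by
    ext A
    exact mem_specialOrthogonalGroup_iff
  rw [hSO]
  exact (isCompact_unitaryGroup ℝ).inter_right
    (isClosed_singleton.preimage continuous_id.matrix_det)

theorem diagonal_update_one_mem_orthogonalGroup (j : n) {c : ℝ} (hc : c * c = 1) :
    diagonal (Function.update 1 j c) ∈ orthogonalGroup n ℝ := by
  rw [mem_orthogonalGroup_iff, diagonal_transpose, diagonal_mul_diagonal, ← diagonal_one]
  congr 1
  ext k
  by_cases hk : k = j
  · subst hk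
    simp [hc]
  · simp [hk]

/-- Complete `w` to an orthonormal basis; if the resulting orthogonal matrix has determinant `-1`,
flip the sign of the `j`-th column. -/
theorem exists_mem_specialOrthogonalGroup_col_eq {i j : n} (hij : i ≠ j)
    (w : EuclideanSpace ℝ n) (hw : ‖w‖ = 1) :
    ∃ A ∈ specialOrthogonalGroup n ℝ, A.col i = w := by
  have hwi : Orthonormal ℝ (({i} : Set n).domRestrict fun _ => w) := by
    rw [orthonormal_iff_ite]
    rintro ⟨a, rfl⟩ ⟨b, rfl⟩
    simp [hw]
  obtain ⟨b, hb⟩ :=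
    Orthonormal.exists_orthonormalBasis_extension_of_card_eq finrank_euclideanSpace hwi
  set M := (EuclideanSpace.basisFun n ℝ).toBasis.toMatrix b
  have hM : M ∈ orthogonalGroup n ℝ :=
    (EuclideanSpace.basisFun n ℝ).toMatrix_orthonormalBasis_mem_orthogonal b
  have hdet : M.det * M.det = 1 := by
    simpa using Unitary.star_mul_self_of_mem (det_of_mem_unitary hM)
  refine ⟨M * diagonal (Function.update 1 j M.det), mem_specialOrthogonalGroup_iff.2
    ⟨mul_mem hM (diagonal_update_one_mem_orthogonalGroup j hdet), ?_⟩, ?_⟩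
  · rw [det_mul, det_diagonal, Finset.prod_update_of_mem (Finset.mem_univ j)]
    simpa using hdet
  · ext k
    simp [M, mul_apply, diagonal_apply, Function.update_apply, hij, Module.Basis.toMatrix_apply,
      hb i rfl]

end Matrix

namespace SOd

variable {d : ℕ}

instance : IsTopologicalGroup (SOd d) where
  continuous_mul := continuous_induced_rng.2 <|
    (continuous_subtype_val.comp continuous_fst).matrix_mul
      (continuous_subtype_val.comp continuous_snd)
  continuous_inv := continuous_induced_rng.2 continuous_subtype_val.matrix_conjTranspose

instance : CompactSpace (SOd d) :=
  isCompact_iff_compactSpace.1 Matrix.isCompact_specialOrthogonalGroup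

instance : SecondCountableTopology (SOd d) :=
  haveI : SecondCountableTopology (Matrix (Fin d) (Fin d) ℝ) :=
    inferInstanceAs (SecondCountableTopology (Fin d → Fin d → ℝ))
  TopologicalSpace.Subtype.secondCountableTopology _

theorem act_smul (θ : SOd d) (r : ℝ) (x : Ed d) : θ.act (r • x) = r • θ.act x :=
  congrArg (WithLp.toLp 2) (Matrix.mulVec_smul θ.1 r (WithLp.ofLp x))

theorem continuous_act : Continuous fun p : SOd d × Ed d => p.1.act p.2 :=
  (PiLp.continuous_toLp 2 _).comp <| (continuous_subtype_val.comp continuous_fst).matrix_mulVec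
    ((PiLp.continuous_ofLp 2 _).comp continuous_snd)

instance : MulAction (SOd d) (Sph d) where
  smul := actS
  one_smul ξ := Subtype.ext (one_act ξ.1)
  mul_smul θ₁ θ₂ ξ := Subtype.ext (act_mul θ₁ θ₂ ξ.1)

instance : ContinuousSMul (SOd d) (Sph d) :=
  ⟨continuous_induced_rng.2 <|
    continuous_act.comp (continuous_fst.prodMk (continuous_subtype_val.comp continuous_snd))⟩

theorem isPretransitive (hd : 2 ≤ d) : MulAction.IsPretransitive (SOd d) (Sph d) := by
  let e₀ : Sph d := ⟨EuclideanSpace.single ⟨0, by omega⟩ 1, by simp⟩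
  refine MulAction.IsPretransitive.of_orbit (x₀ := e₀) fun ξ => ?_
  obtain ⟨A, hA, hcol⟩ := Matrix.exists_mem_specialOrthogonalGroup_col_eq
    (i := ⟨0, by omega⟩) (j := ⟨1, by omega⟩) (by simp [Fin.ext_iff]) ξ.1 (by simp)
  refine ⟨⟨A, hA⟩, Subtype.ext ?_⟩
  change WithLp.toLp 2 (A *ᵥ Pi.single _ 1) = ξ.1
  rw [Matrix.mulVec_single_one, hcol, WithLp.toLp_ofLp]

end SOd

namespace MeasureTheory.Measure

variable {G X : Type*} [Group G] [TopologicalSpace G] [IsTopologicalGroup G]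
  [LocallyCompactSpace G] [MeasurableSpace G] [BorelSpace G]

theorem IsHaarMeasure.isMulRightInvariant_of_isProbabilityMeasure (μ : Measure G)
    [μ.IsHaarMeasure] [IsProbabilityMeasure μ] : μ.IsMulRightInvariant :=
  ⟨fun g =>
    haveI := isProbabilityMeasure_map (μ := μ) (measurable_mul_const g).aemeasurable
    isHaarMeasure_eq_of_isProbabilityMeasure _ μ⟩

/-- Both sides are computed from `μ.prod ν` of `{(g, y) | g • y ∈ A}`: integrating over `y` first
uses right invariance of `μ` and transitivity, integrating over `g` first uses invariance of
`ν`. -/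
theorem map_smul_const_eq_of_isPretransitive [MeasurableSpace X] [MulAction G X]
    [MeasurableSMul₂ G X] [MulAction.IsPretransitive G X]
    (μ : Measure G) [μ.IsHaarMeasure] [IsProbabilityMeasure μ]
    (ν : Measure X) [IsProbabilityMeasure ν] [SMulInvariantMeasure G X ν] (x : X) :
    μ.map (· • x) = ν := by
  have := IsHaarMeasure.isMulRightInvariant_of_isProbabilityMeasure μ
  ext A hA
  have hE : MeasurableSet {p : G × X | p.1 • p.2 ∈ A} := measurable_smul hA
  have hfiber : ∀ y : X, μ {g | g • y ∈ A} = μ {g | g • x ∈ A} := by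
    intro y
    obtain ⟨h, rfl⟩ := MulAction.exists_smul_eq G x y
    simpa [Set.preimage, mul_smul] using measure_preimage_mul_right μ h {g | g • x ∈ A}
  calc μ.map (· • x) A = μ {g | g • x ∈ A} := map_apply (measurable_smul_const x) hA
    _ = μ.prod ν {p : G × X | p.1 • p.2 ∈ A} := by
      simp [prod_apply_symm hE, Set.preimage, hfiber]
    _ = ν A := by
      have hsmul (g : G) : ν {y | g • y ∈ A} = ν A := measure_preimage_smul ν g A
      simp [prod_apply hE, Set.preimage, hsmul]

end MeasureTheory.Measure

theorem MeasureTheory.eLpNorm_map_measure_le {α β ε : Type*} [MeasurableSpace α]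
    [MeasurableSpace β] [ENorm ε] {p : ℝ≥0∞} (hp0 : p ≠ 0) (hp : p ≠ ∞) (μ : Measure α)
    (f : α → β) (g : β → ε) : eLpNorm g p (μ.map f) ≤ eLpNorm (g ∘ f) p μ := by
  rw [eLpNorm_eq_lintegral_rpow_enorm_toReal hp0 hp, eLpNorm_eq_lintegral_rpow_enorm_toReal hp0 hp]
  gcongr
  exact lintegral_map_le _ f

theorem exists_sph_eq_norm_smul {d : ℕ} (hd : 0 < d) (x : Ed d) :
    ∃ u : Sph d, x = ‖x‖ • (u : Ed d) := by
  by_cases hx : x = 0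
  · have : Nonempty (Fin d) := ⟨⟨0, hd⟩⟩
    obtain ⟨u, hu⟩ : (Metric.sphere (0 : Ed d) 1).Nonempty :=
      NormedSpace.sphere_nonempty.2 zero_le_one
    exact ⟨⟨u, hu⟩, by simp [hx]⟩
  · exact ⟨⟨‖x‖⁻¹ • x, by simp [norm_smul, hx]⟩, (smul_inv_smul₀ (norm_ne_zero_iff.2 hx) x).symm⟩

theorem Tav_smul_comp_smul {d : ℕ} (μ : Measure (IsomRd d)) (r : ℝ) (u : Sph d)
    (φ : Sph d → ℂ) :
    Tav μ (r • (u : Ed d)) (φ ∘ (· • u)) = Sav μ r φ ∘ (· • u) := by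
  funext ω
  refine integral_congr_ae (Filter.Eventually.of_forall fun g => ?_)
  simp only [piRep, rhoRep, Function.comp_apply, SOd.act_smul, real_inner_smul_left, mul_smul]
  rfl

theorem SavNorm_le_TavNorm_general
    (d : ℕ) (hd : 3 ≤ d)
    (mSO : Measure (SOd d)) [mSO.IsHaarMeasure] [IsProbabilityMeasure mSO]
    (mS : Measure (Sph d)) [IsProbabilityMeasure mS]
    (hrotinv : ∀ θ : SOd d, Measure.map (SOd.actS θ) mS = mS)
    (μ : Measure (IsomRd d))
    (x : Ed d) :
    SavNorm μ mS ‖x‖ ≤ TavNorm μ mSO x := by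
  have := SOd.isPretransitive (by omega : 2 ≤ d)
  have : SMulInvariantMeasure (SOd d) (Sph d) mS :=
    ((smulInvariantMeasure_tfae (SOd d) mS).out 0 5).2 hrotinv
  obtain ⟨u, hxu⟩ := exists_sph_eq_norm_smul (by omega) x
  have hu : MeasurePreserving (· • u) mSO mS :=
    ⟨measurable_smul_const u, Measure.map_smul_const_eq_of_isPretransitive mSO mS u⟩
  refine iSup₂_le fun φ ⟨hφ, hφ1⟩ => ?_
  calc eLpNorm (Sav μ ‖x‖ φ) 2 mS
      ≤ eLpNorm (Sav μ ‖x‖ φ ∘ (· • u)) 2 mSO :=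
        hu.map_eq ▸ eLpNorm_map_measure_le two_ne_zero ENNReal.ofNat_ne_top mSO _ _
    _ = eLpNorm (Tav μ x (φ ∘ (· • u))) 2 mSO := by rw [← Tav_smul_comp_smul, ← hxu]
    _ ≤ TavNorm μ mSO x :=
        le_iSup₂_of_le _ ⟨hφ.comp_measurePreserving hu,
          (eLpNorm_comp_measurePreserving hφ.1 hu).trans hφ1⟩ le_rfl

/-- **Remark (comparison of the two averaging operators).**
Let `d ≥ 3`, `G = Isom(ℝ^d)` and let `μ` be a Borel probability measure on `G`.  Then for every
`x ∈ ℝ^d` one has `‖S_{|x|}‖ ≤ ‖T_x‖`, where `T_x = π_x(μ)` acts on `L²(SO(d))` (with its Haar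
probability measure `mSO`) and `S_{|x|} = ρ_{|x|}(μ)` acts on `L²(𝕊^{d-1})` (with its
rotation-invariant probability measure `mS`). -/
theorem SavNorm_le_TavNorm
    (d : ℕ) (hd : 3 ≤ d)
    (mSO : Measure (SOd d)) [mSO.IsHaarMeasure] [IsProbabilityMeasure mSO]
    (mS : Measure (Sph d)) [IsProbabilityMeasure mS]
    (hrotinv : ∀ θ : SOd d, Measure.map (SOd.actS θ) mS = mS)
    (μ : Measure (IsomRd d)) [IsProbabilityMeasure μ]
    (x : Ed d) :
    SavNorm μ mS ‖x‖ ≤ TavNorm μ mSO x :=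
  SavNorm_le_TavNorm_general d hd mSO mS hrotinv μ x
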